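/- Let T=(V,E,γ,p) be a fault tree with an enumeration BE(T) = {v₀,…,v_{n−1}} and failure probabilities p(v_i) = 10^{−2^i}. Assume CS(T) ≠ ∅, let M be the set of minimal cut sets, define κ(f) = Σ_{i: f_{v_i}=1} 2^i for f ∈ {0,1}^{BE(T)}, and let g ∈ M attain the minimum of κ over M. Then 10^{−κ(g)} ≤ U(T) < 10^{1−κ(g)}; consequently −⌊log₁₀ U(T)⌋ = κ(g). -/
import Mathlib


open Finset

/-- Gate types of a (static) fault tree. -/
inductive Gate where
  | OR | AND | BE
deriving DecidableEq

/-- A fault tree on a vertex type `V`: a children function (giving the edges),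
a root, a gate labelling and failure probabilities for the basic events. -/
structure FT (V : Type*) where
  children : V → Finset V
  root : V
  gate : V → Gate
  p : V → ℝ

namespace FT

variable {V : Type*} [Fintype V] [DecidableEq V]

/-- The edge relation: `T.edge a b` iff there is an edge `a → b`. -/
def edge (T : FT V) (a b : V) : Prop := b ∈ T.children a

/-- `x ⪯ y` iff there is a directed path from `y` to `x`. -/
def vle (T : FT V) (x y : V) : Prop := Relation.ReflTransGen T.edge y x

/-- `x ≺ y`. -/
def vlt (T : FT V) (x y : V) : Prop := T.vle x y ∧ x ≠ y

/-- Well-formedness of a fault tree: every node is reachable from the root,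
the graph is acyclic, a node is a basic event iff it is a leaf, and failure
probabilities of basic events lie in `[0,1]`. -/
def WF (T : FT V) : Prop :=
  (∀ v, Relation.ReflTransGen T.edge T.root v) ∧
  (∀ v, ¬ Relation.TransGen T.edge v v) ∧
  (∀ v, (T.gate v = Gate.BE ↔ T.children v = ∅)) ∧
  (∀ v, T.gate v = Gate.BE → 0 ≤ T.p v ∧ T.p v ≤ 1)

/-- The set `BE(T)` of basic events. -/
def BEs (T : FT V) : Finset V := Finset.univ.filter fun v => T.gate v = Gate.BE

/-- The structure function: `T.Fails f v` holds iff `struc_T(v,f) = 1`,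
i.e. the safety event `f` propagates to the node `v`. -/
inductive Fails (T : FT V) (f : V → Bool) : V → Prop
  | be {v : V} : T.gate v = Gate.BE → f v = true → Fails T f v
  | or {v w : V} : T.gate v = Gate.OR → w ∈ T.children v → Fails T f w → Fails T f v
  | and {v : V} : T.gate v = Gate.AND → (∀ w ∈ T.children v, Fails T f w) → Fails T f v

/-- A function `V → Bool` encodes an element of `{0,1}^{BE(T)}` iff it is
`false` outside the basic events. -/
def Normalized (T : FT V) (f : V → Bool) : Prop :=
  ∀ v, T.gate v ≠ Gate.BE → f v = false

/-- The probability weight `∏_{v : f_v = 1} p(v) ∏_{v : f_v = 0} (1 - p(v))`. -/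
noncomputable def weight (T : FT V) (f : V → Bool) : ℝ :=
  ∏ v ∈ T.BEs, if f v then T.p v else 1 - T.p v

open scoped Classical in
/-- The set `CS(T)` of cut sets (as normalized Boolean vectors). -/
noncomputable def cutSets (T : FT V) : Finset (V → Bool) :=
  Finset.univ.filter fun f => T.Normalized f ∧ T.Fails f T.root

/-- The unreliability `U(T)`. -/
noncomputable def unrel (T : FT V) : ℝ := ∑ f ∈ T.cutSets, T.weight f

/-- `f` is a minimal cut set. -/
def MinCut (T : FT V) (f : V → Bool) : Prop :=
  T.Normalized f ∧ T.Fails f T.root ∧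
  ∀ g : V → Bool, T.Normalized g → T.Fails g T.root → (∀ v, g v ≤ f v) → g = f

end FT

open FT

section Aux

variable {V : Type*} [Fintype V] [DecidableEq V]

private lemma bool_le_true {a b : Bool} (h : a ≤ b) (ha : a = true) : b = true := by
  subst ha; exact eq_top_iff.mpr h

/-- The structure function is monotone. -/
private lemma fails_mono {T : FT V} {f f' : V → Bool} (h : ∀ v, f v ≤ f' v) {v : V}
    (hf : T.Fails f v) : T.Fails f' v := by
  induction hf with
  | be hv hfv => exact FT.Fails.be hv (bool_le_true (h _) hfv)
  | or hv hw _ ih => exact FT.Fails.or hv hw ih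
  | and hv _ ih => exact FT.Fails.and hv ih

end Aux


variable {V : Type*} [Fintype V] [DecidableEq V]

open scoped Classical in
/-- **Statement 17.** Suppose `BE(T) = {v₀, …, v_{n-1}}` with
`p(v_i) = 10^{-2^i}`, `CS(T) ≠ ∅`, and let `κ(f) = Σ_{i : f_{v_i} = 1} 2^i`.
If the minimal cut set `g` minimizes `κ` over all minimal cut sets, then
`10^{-κ(g)} ≤ U(T) < 10^{1-κ(g)}`, and consequently
`-⌊log₁₀ U(T)⌋ = κ(g)`. -/
theorem unrel_determines_min_kappa (T : FT V) (hT : T.WF)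
    (n : ℕ) (e : Fin n → V) (he : Function.Injective e)
    (hrange : ∀ v : V, v ∈ T.BEs ↔ ∃ i : Fin n, e i = v)
    (hp : ∀ i : Fin n, T.p (e i) = (10 : ℝ) ^ (-(2 ^ (i : ℕ) : ℤ)))
    (hCS : ∃ f : V → Bool, T.Normalized f ∧ T.Fails f T.root)
    (κ : (V → Bool) → ℕ)
    (hκ : ∀ f : V → Bool,
      κ f = ∑ i ∈ Finset.univ.filter (fun i : Fin n => f (e i) = true), 2 ^ (i : ℕ))
    (g : V → Bool) (hg : T.MinCut g)
    (hmin : ∀ f : V → Bool, T.MinCut f → κ g ≤ κ f) :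
    (10 : ℝ) ^ (-(κ g : ℤ)) ≤ T.unrel ∧
    T.unrel < (10 : ℝ) ^ ((1 : ℤ) - (κ g : ℤ)) ∧
    -⌊Real.logb 10 T.unrel⌋ = (κ g : ℤ) := by
  classical
  have h10 : (1:ℝ) < 10 := by norm_num
  have hsum2 : ∀ m : ℕ, ∑ j ∈ Finset.range m, 2 ^ j < 2 ^ m := by
    intro m
    induction m with
    | zero => simp
    | succ m ih =>
      rw [Finset.sum_range_succ, pow_succ, mul_two]
      exact Nat.add_lt_add_right ih _
  -- p values
  have hp' : ∀ i : Fin n, T.p (e i) = ((10:ℝ) ^ (2 ^ (i:ℕ)))⁻¹ := by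
    intro i
    rw [hp i, zpow_neg]
    norm_cast
  have hp_pos : ∀ i : Fin n, 0 < T.p (e i) := fun i => by rw [hp' i]; positivity
  have hp_le1 : ∀ i : Fin n, T.p (e i) ≤ 1 := fun i => by
    rw [hp' i]
    rw [inv_le_one_iff₀]
    right; exact one_le_pow₀ (by norm_num)
  -- basic events as image
  have hBE : T.BEs = Finset.image e Finset.univ := by
    ext v; simp [hrange v]
  -- weight as product over Fin n
  have hw : ∀ f : V → Bool,
      T.weight f = ∏ i : Fin n, (if f (e i) then T.p (e i) else 1 - T.p (e i)) := by
    intro f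
    rw [FT.weight, hBE, Finset.prod_image (fun i _ j _ h => he h)]
  have hw_nonneg : ∀ f : V → Bool, 0 ≤ T.weight f := by
    intro f; rw [hw]
    apply Finset.prod_nonneg; intro i _
    split
    · exact (hp_pos i).le
    · linarith [hp_le1 i]
  -- products of p over subsets of Fin n
  have hprodS : ∀ s : Finset (Fin n),
      ∏ i ∈ s, T.p (e i) = ((10:ℝ) ^ (∑ i ∈ s, 2 ^ (i:ℕ)))⁻¹ := by
    intro s
    calc ∏ i ∈ s, T.p (e i) = ∏ i ∈ s, ((10:ℝ) ^ (2 ^ (i:ℕ)))⁻¹ := by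
          exact Finset.prod_congr rfl fun i _ => hp' i
      _ = (∏ i ∈ s, (10:ℝ) ^ (2 ^ (i:ℕ)))⁻¹ := by rw [Finset.prod_inv_distrib]
      _ = ((10:ℝ) ^ (∑ i ∈ s, 2 ^ (i:ℕ)))⁻¹ := by rw [Finset.prod_pow_eq_pow_sum]
  -- monotonicity of κ
  have hκmono : ∀ f f' : V → Bool, (∀ v, f v ≤ f' v) → κ f ≤ κ f' := by
    intro f f' h
    rw [hκ, hκ]
    apply Finset.sum_le_sum_of_subset
    intro i hi
    simp only [Finset.mem_filter, Finset.mem_univ, true_and] at hi ⊢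
    exact bool_le_true (h (e i)) hi
  -- strict monotonicity of κ
  have hκstrict : ∀ f f' : V → Bool, T.Normalized f' → (∀ v, f v ≤ f' v) → f ≠ f' →
      κ f < κ f' := by
    intro f f' hn' h hne
    obtain ⟨v, hv⟩ : ∃ v, f v ≠ f' v := by
      by_contra hc; push_neg at hc; exact hne (funext hc)
    have hfv : f v = false := by
      cases hfv : f v
      · rfl
      · exact absurd (bool_le_true (h v) hfv) (by simp [hfv] at hv; simp [hv])
    have hfv' : f' v = true := by
      cases hfv' : f' v
      · rw [hfv, hfv'] at hv; exact absurd rfl hv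
      · rfl
    have hvBE : T.gate v = Gate.BE := by
      by_contra hvb
      rw [hn' v hvb] at hfv'; exact Bool.false_ne_true hfv'
    obtain ⟨i, rfl⟩ := (hrange v).mp (by simp [FT.BEs, hvBE])
    rw [hκ, hκ]
    apply Finset.sum_lt_sum_of_subset
      (by intro j hj
          simp only [Finset.mem_filter, Finset.mem_univ, true_and] at hj ⊢
          exact bool_le_true (h (e j)) hj)
      (i := i) (by simp [hfv']) (by simp [hfv]) (by positivity)
      (fun j _ _ => Nat.zero_le _)
  -- injectivity of κ on normalized vectors
  have hκinj : ∀ f f' : V → Bool, T.Normalized f → T.Normalized f' → κ f = κ f' →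
      f = f' := by
    intro f f' hnf hnf' hk
    rw [hκ, hκ] at hk
    have him : ∀ h : V → Bool,
        ∑ i ∈ Finset.univ.filter (fun i : Fin n => h (e i) = true), 2 ^ (i:ℕ)
        = ∑ m ∈ (Finset.univ.filter (fun i : Fin n => h (e i) = true)).image Fin.val,
            2 ^ m := by
      intro h
      rw [Finset.sum_image (fun i _ j _ hh => Fin.val_injective hh)]
    rw [him f, him f'] at hk
    have h2 := Finset.geomSum_injective le_rfl hk
    have h3 := Finset.image_injective Fin.val_injective h2
    funext v
    by_cases hvBE : T.gate v = Gate.BE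
    · obtain ⟨i, rfl⟩ := (hrange v).mp (by simp [FT.BEs, hvBE])
      have hiff : f (e i) = true ↔ f' (e i) = true := by
        constructor
        · intro hfi
          have : i ∈ Finset.univ.filter (fun j : Fin n => f' (e j) = true) := by
            rw [← h3]; simp [hfi]
          simpa using this
        · intro hfi
          have : i ∈ Finset.univ.filter (fun j : Fin n => f (e j) = true) := by
            rw [h3]; simp [hfi]
          simpa using this
      cases hfi' : f' (e i)
      · refine Bool.eq_false_iff.mpr (fun h => ?_)
        have := hiff.mp h
        rw [this] at hfi'
        simp at hfi'
      · exact hiff.mpr hfi' 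
    · rw [hnf v hvBE, hnf' v hvBE]
  -- every cut set dominates a minimal cut set, hence κ g ≤ κ f
  have hKle : ∀ f : V → Bool, T.Normalized f → T.Fails f T.root → κ g ≤ κ f := by
    intro f hnf hff
    have hfS : f ∈ T.cutSets.filter (fun h => ∀ v, h v ≤ f v) := by
      simp [FT.cutSets, hnf, hff]
    obtain ⟨h, hhS, hmin'⟩ :=
      Finset.exists_min_image (T.cutSets.filter (fun h => ∀ v, h v ≤ f v)) κ ⟨f, hfS⟩
    simp only [Finset.mem_filter, FT.cutSets, Finset.mem_univ, true_and] at hhS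
    obtain ⟨⟨hnh, hfh⟩, hhle⟩ := hhS
    have hMC : T.MinCut h := by
      refine ⟨hnh, hfh, fun g' hng' hfg' hle => ?_⟩
      by_contra hne
      have h1 : κ g' < κ h := hκstrict g' h hnh hle hne
      have h2 : κ h ≤ κ g' := by
        apply hmin'
        simp only [Finset.mem_filter, FT.cutSets, Finset.mem_univ, true_and]
        exact ⟨⟨hng', hfg'⟩, fun v => le_trans (hle v) (hhle v)⟩
      omega
    exact le_trans (hmin h hMC) (hκmono h f hhle)
  -- the support of g
  set A : Finset V := Finset.univ.filter (fun v => g v = true) with hA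
  have hAsub : A ⊆ T.BEs := by
    intro v hv
    simp only [hA, Finset.mem_filter, Finset.mem_univ, true_and] at hv
    by_contra hvb
    have hvb' : T.gate v ≠ Gate.BE := by simpa [FT.BEs] using hvb
    rw [hg.1 v hvb'] at hv; exact Bool.false_ne_true hv
  have hAim : A = (Finset.univ.filter (fun i : Fin n => g (e i) = true)).image e := by
    ext v
    simp only [Finset.mem_image, Finset.mem_filter, Finset.mem_univ, true_and]
    constructor
    · intro hv
      obtain ⟨i, rfl⟩ := (hrange v).mp (hAsub hv)
      simp only [hA, Finset.mem_filter, Finset.mem_univ, true_and] at hv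
      exact ⟨i, hv, rfl⟩
    · rintro ⟨i, hi, rfl⟩
      simp [hA, hi]
  have hprodA : ∏ v ∈ A, T.p v = ((10:ℝ) ^ (κ g))⁻¹ := by
    rw [hAim, Finset.prod_image (fun i _ j _ h => he h), hprodS, hκ g]
  -- the up-set of g
  set B : Finset V := T.BEs \ A with hB
  set F : Finset V → (V → Bool) := fun t v => decide (v ∈ t) with hF
  set Up : Finset (V → Bool) := B.powerset.image (fun t => F (A ∪ t)) with hUp
  have hUpsub : Up ⊆ T.cutSets := by
    intro f hf
    simp only [hUp, Finset.mem_image, Finset.mem_powerset] at hf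
    obtain ⟨t, ht, rfl⟩ := hf
    have hnorm : T.Normalized (F (A ∪ t)) := by
      intro v hv
      simp only [hF, decide_eq_false_iff_not]
      intro hmem
      have hvBE : v ∈ T.BEs := by
        rcases Finset.mem_union.mp hmem with h | h
        · exact hAsub h
        · exact (Finset.mem_sdiff.mp (ht h)).1
      simp only [FT.BEs, Finset.mem_filter, Finset.mem_univ, true_and] at hvBE
      exact hv hvBE
    refine Finset.mem_filter.mpr ⟨Finset.mem_univ _, hnorm, ?_⟩
    apply fails_mono _ hg.2.1
    intro v
    cases hgv : g v
    · exact Bool.false_le _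
    · have : v ∈ A ∪ t := Finset.mem_union_left _ (by simp [hA, hgv])
      simp [hF, this]
  have hinjUp : ∀ t ∈ B.powerset, ∀ u ∈ B.powerset, F (A ∪ t) = F (A ∪ u) → t = u := by
    intro t ht u hu h
    rw [Finset.mem_powerset] at ht hu
    have hAu : A ∪ t = A ∪ u := by
      ext v
      have := congrFun h v
      simp only [hF] at this
      exact decide_eq_decide.mp this
    ext v
    constructor
    · intro hv
      have hvA : v ∉ A := (Finset.mem_sdiff.mp (ht hv)).2
      have : v ∈ A ∪ u := hAu ▸ Finset.mem_union_right _ hv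
      rcases Finset.mem_union.mp this with h' | h'
      · exact absurd h' hvA
      · exact h'
    · intro hv
      have hvA : v ∉ A := (Finset.mem_sdiff.mp (hu hv)).2
      have : v ∈ A ∪ t := hAu ▸ Finset.mem_union_right _ hv
      rcases Finset.mem_union.mp this with h' | h'
      · exact absurd h' hvA
      · exact h'
  -- the weight of an element of the up-set
  have hwUp : ∀ t ∈ B.powerset, T.weight (F (A ∪ t)) =
      (∏ v ∈ A, T.p v) * ((∏ v ∈ t, T.p v) * ∏ v ∈ B \ t, (1 - T.p v)) := by
    intro t ht
    rw [Finset.mem_powerset] at ht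
    have htBE : t ⊆ T.BEs := fun v hv => (Finset.mem_sdiff.mp (ht hv)).1
    have hAt : A ∪ t ⊆ T.BEs := Finset.union_subset hAsub htBE
    have hdisj : Disjoint A t := by
      rw [Finset.disjoint_right]
      intro v hv
      exact (Finset.mem_sdiff.mp (ht hv)).2
    have hsplit : T.BEs \ (A ∪ t) = B \ t := by
      ext v
      simp only [hB, Finset.mem_sdiff, Finset.mem_union]
      tauto
    rw [FT.weight]
    rw [← Finset.prod_inter_mul_prod_diff T.BEs (A ∪ t)]
    rw [Finset.inter_eq_right.mpr hAt, hsplit]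
    have h1 : ∏ v ∈ A ∪ t, (if F (A ∪ t) v then T.p v else 1 - T.p v)
        = ∏ v ∈ A ∪ t, T.p v := by
      apply Finset.prod_congr rfl
      intro v hv; simp [hF, hv]
    have h2 : ∏ v ∈ B \ t, (if F (A ∪ t) v then T.p v else 1 - T.p v)
        = ∏ v ∈ B \ t, (1 - T.p v) := by
      apply Finset.prod_congr rfl
      intro v hv
      rw [Finset.mem_sdiff, hB, Finset.mem_sdiff] at hv
      have : v ∉ A ∪ t := by
        rw [Finset.mem_union]
        rintro (h | h)
        · exact hv.1.2 h
        · exact hv.2 h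
      simp [hF, this]
    rw [h1, h2, Finset.prod_union hdisj, mul_assoc]
  -- the sum over the up-set
  have hUp_sum : ∑ f ∈ Up, T.weight f = ((10:ℝ) ^ (κ g))⁻¹ := by
    rw [hUp, Finset.sum_image hinjUp, Finset.sum_congr rfl hwUp, ← Finset.mul_sum]
    have : ∑ t ∈ B.powerset, (∏ v ∈ t, T.p v) * ∏ v ∈ B \ t, (1 - T.p v)
        = ∏ v ∈ B, (T.p v + (1 - T.p v)) := (Finset.prod_add _ _ _).symm
    rw [this]
    simp [hprodA]
  -- lower bound
  have hLB : ((10:ℝ) ^ (κ g))⁻¹ ≤ T.unrel := by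
    rw [← hUp_sum]
    exact Finset.sum_le_sum_of_subset_of_nonneg hUpsub (fun f _ _ => hw_nonneg f)
  -- upper bound on individual weights
  have hub : ∀ f ∈ T.cutSets, T.weight f ≤ ((10:ℝ) ^ (κ f))⁻¹ := by
    intro f hf
    rw [hw]
    calc ∏ i : Fin n, (if f (e i) then T.p (e i) else 1 - T.p (e i))
        ≤ ∏ i : Fin n, (if f (e i) then T.p (e i) else 1) := by
          apply Finset.prod_le_prod
          · intro i _; split
            · exact (hp_pos i).le
            · linarith [hp_le1 i]
          · intro i _; split
            · exact le_refl _
            · linarith [hp_pos i]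
      _ = ∏ i ∈ Finset.univ.filter (fun i : Fin n => f (e i) = true), T.p (e i) := by
          rw [Finset.prod_filter]
      _ = ((10:ℝ) ^ (κ f))⁻¹ := by rw [hprodS, hκ f]
  -- κ f < 2 ^ n
  have hκlt : ∀ f : V → Bool, κ f < 2 ^ n := by
    intro f
    rw [hκ]
    calc ∑ i ∈ Finset.univ.filter (fun i : Fin n => f (e i) = true), 2 ^ (i:ℕ)
        ≤ ∑ i : Fin n, 2 ^ (i:ℕ) :=
          Finset.sum_le_sum_of_subset (Finset.filter_subset _ _)
      _ = ∑ j ∈ Finset.range n, 2 ^ j := Fin.sum_univ_eq_sum_range _ n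
      _ < 2 ^ n := hsum2 n
  -- upper bound
  have hUB : T.unrel < 10 * ((10:ℝ) ^ (κ g))⁻¹ := by
    have hinj : ∀ f ∈ T.cutSets, ∀ f' ∈ T.cutSets, κ f = κ f' → f = f' := by
      intro f hf f' hf' h
      simp only [FT.cutSets, Finset.mem_filter, Finset.mem_univ, true_and] at hf hf'
      exact hκinj f f' hf.1 hf'.1 h
    calc T.unrel ≤ ∑ f ∈ T.cutSets, ((10:ℝ) ^ (κ f))⁻¹ := Finset.sum_le_sum hub
      _ = ∑ m ∈ T.cutSets.image κ, ((10:ℝ) ^ m)⁻¹ := (Finset.sum_image (f := fun m : ℕ => ((10:ℝ) ^ m)⁻¹) hinj).symm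
      _ ≤ ∑ m ∈ Finset.Ico (κ g) (2 ^ n), ((10:ℝ) ^ m)⁻¹ := by
          apply Finset.sum_le_sum_of_subset_of_nonneg
          · intro m hm
            simp only [Finset.mem_image] at hm
            obtain ⟨f, hf, rfl⟩ := hm
            simp only [FT.cutSets, Finset.mem_filter, Finset.mem_univ, true_and] at hf
            exact Finset.mem_Ico.mpr ⟨hKle f hf.1 hf.2, hκlt f⟩
          · intro m _ _; positivity
      _ = ∑ m ∈ Finset.Ico (κ g) (2 ^ n), ((10:ℝ)⁻¹) ^ m := by
          apply Finset.sum_congr rfl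
          intro m _; rw [inv_pow]
      _ ≤ ((10:ℝ)⁻¹) ^ (κ g) / (1 - 10⁻¹) :=
          geom_sum_Ico_le_of_lt_one (by norm_num) (by norm_num)
      _ < 10 * ((10:ℝ) ^ (κ g))⁻¹ := by
          rw [inv_pow, div_lt_iff₀ (by norm_num)]
          have : (0:ℝ) < ((10:ℝ) ^ (κ g))⁻¹ := by positivity
          nlinarith
  -- translate powers
  have hzpow : ((10:ℝ) ^ (κ g))⁻¹ = (10:ℝ) ^ (-(κ g : ℤ)) := by
    rw [zpow_neg, zpow_natCast]
  have hzpow' : (10:ℝ) ^ ((1:ℤ) - (κ g : ℤ)) = 10 * ((10:ℝ) ^ (κ g))⁻¹ := by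
    rw [zpow_sub₀ (by norm_num : (10:ℝ) ≠ 0), zpow_one, zpow_natCast, div_eq_mul_inv]
  have hLB' : (10:ℝ) ^ (-(κ g : ℤ)) ≤ T.unrel := hzpow ▸ hLB
  have hUB' : T.unrel < (10:ℝ) ^ ((1:ℤ) - (κ g : ℤ)) := hzpow' ▸ hUB
  refine ⟨hLB', hUB', ?_⟩
  have hUpos : 0 < T.unrel := lt_of_lt_of_le (by positivity) hLB'
  have hfloor : ⌊Real.logb 10 T.unrel⌋ = -(κ g : ℤ) := by
    rw [Int.floor_eq_iff]
    constructor
    · rw [Real.le_logb_iff_rpow_le h10 hUpos, Real.rpow_intCast]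
      exact hLB'
    · rw [Real.logb_lt_iff_lt_rpow h10 hUpos]
      have : ((-(κ g : ℤ) : ℤ) : ℝ) + 1 = (((1:ℤ) - (κ g : ℤ) : ℤ) : ℝ) := by push_cast; ring
      rw [this, Real.rpow_intCast]
      exact hUB'
  rw [hfloor]; ring
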